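/- Let (L,[-,-],{-,-,-}) be a Lie-Yamaguti algebra and N : L → L a linear map with N² = id_L. Then N is a Nijenhuis operator on L if and only if N is a modified Rota-Baxter operator on L. -/
import Mathlib


/-- A Lie-Yamaguti algebra: bilinear bracket `br`, trilinear bracket `tr`,
satisfying (LY1)-(LY6). -/
structure LieYamaguti (K : Type*) (L : Type*) [Field K] [AddCommGroup L] [Module K L] where
  br : L →ₗ[K] L →ₗ[K] L
  tr : L →ₗ[K] L →ₗ[K] L →ₗ[K] L
  ly1 : ∀ x y, br x y = - br y x
  ly2 : ∀ x y z, tr x y z = - tr y x z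
  ly3 : ∀ x y z,
    br (br x y) z + br (br y z) x + br (br z x) y + tr x y z + tr y z x + tr z x y = 0
  ly4 : ∀ x y z a, tr (br x y) z a + tr (br z x) y a + tr (br y z) x a = 0
  ly5 : ∀ a b x y, tr a b (br x y) = br (tr a b x) y + br x (tr a b y)
  ly6 : ∀ a b x y z,
    tr a b (tr x y z) = tr (tr a b x) y z + tr x (tr a b y) z + tr x y (tr a b z)

/-- A modified Rota-Baxter operator on a Lie-Yamaguti algebra. -/
def IsMRB {K L : Type*} [Field K] [AddCommGroup L] [Module K L]
    (A : LieYamaguti K L) (R : L →ₗ[K] L) : Prop :=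
  (∀ x y, A.br (R x) (R y) = R (A.br (R x) y + A.br x (R y)) - A.br x y) ∧
  (∀ x y z, A.tr (R x) (R y) (R z) =
      R (A.tr x (R y) (R z) + A.tr (R x) y (R z) + A.tr (R x) (R y) z + A.tr x y z)
      - A.tr (R x) y z - A.tr x (R y) z - A.tr x y (R z))

/-- A Nijenhuis operator on a Lie-Yamaguti algebra. -/
def IsNijenhuis {K L : Type*} [Field K] [AddCommGroup L] [Module K L]
    (A : LieYamaguti K L) (N : L →ₗ[K] L) : Prop :=
  (∀ x y, A.br (N x) (N y) = N (A.br (N x) y + A.br x (N y) - N (A.br x y))) ∧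
  (∀ x y z, A.tr (N x) (N y) (N z) =
      N (A.tr (N x) (N y) z + A.tr (N x) y (N z) + A.tr x (N y) (N z))
      - N (N (A.tr (N x) y z + A.tr x (N y) z + A.tr x y (N z)))
      + N (N (N (A.tr x y z))))

/-- For a linear map `N` with `N² = id`, `N` is a Nijenhuis operator iff `N` is a
modified Rota-Baxter operator. -/
theorem nijenhuis_iff_isMRB (K L : Type*) [Field K] [CharZero K]
    [AddCommGroup L] [Module K L]
    (A : LieYamaguti K L) (N : L →ₗ[K] L) (hN : N ∘ₗ N = LinearMap.id) :
    IsNijenhuis A N ↔ IsMRB A N := by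
  have hid : ∀ x, N (N x) = x := fun x => LinearMap.congr_fun hN x
  constructor <;> rintro ⟨h1, h2⟩ <;> refine ⟨fun x y => ?_, fun x y z => ?_⟩
  · rw [h1]; simp only [map_add, map_sub, hid]
  · rw [h2]; simp only [map_add, map_sub, hid]; abel
  · rw [h1]; simp only [map_add, map_sub, hid]
  · rw [h2]; simp only [map_add, map_sub, hid]; abel
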